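/- arXiv:1107.2094 — 4 statements merged into one kernel-verified Lean document; each statement's English description precedes it below -/
import Mathlib

section
/- Let H and K be Hilbert spaces with H ≠ {0}, and let F₁, F₂ be closed subspaces of K. Then the intersection of the closed subspaces H ⊗ F₁ and H ⊗ F₂ of H ⊗ K equals H ⊗ (F₁ ∩ F₂). In particular, if (H ⊗ F₁) ∩ (H ⊗ F₂) = {0} then F₁ ∩ F₂ = {0}. -/
/-!
Simple tensors with second leg in `F` are orthogonal to those with second leg in `Fᗮ`, and by
density the two families together are total; hence `H ⊗ F = (tensorSpan t Fᗮ)ᗮ`. So `z ∈ H ⊗ F`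
iff each functional `η ↦ ⟪z, t ξ η⟫` vanishes on `Fᗮ`. Vanishing on `F₁ᗮ` and on `F₂ᗮ` means
vanishing on the closure of `F₁ᗮ ⊔ F₂ᗮ`, which is `(F₁ ⊓ F₂)ᗮ`. The second claim holds because
`‖t ξ η‖ = ‖ξ‖ ‖η‖`.
-/

open Submodule

theorem Submodule.orthogonal_eq_topologicalClosure_of_le_orthogonal {𝕜 E : Type*} [RCLike 𝕜]
    [NormedAddCommGroup E] [InnerProductSpace 𝕜 E] [CompleteSpace E] {A B : Submodule 𝕜 E}
    (hBA : B ≤ Aᗮ) (h : (A ⊔ B)ᗮ = ⊥) : Aᗮ = B.topologicalClosure := by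
  have hle : B.topologicalClosure ≤ Aᗮ :=
    B.topologicalClosure_minimal hBA A.isClosed_orthogonal
  rw [← sup_orthogonal_inf_of_hasOrthogonalProjection hle, ← orthogonal_orthogonal_eq_closure,
    triorthogonal_eq_orthogonal, inf_orthogonal B A, sup_comm B A, h, sup_bot_eq]

section TensorSpan

variable {𝕜 H K E : Type*} [RCLike 𝕜]
  [NormedAddCommGroup H] [InnerProductSpace 𝕜 H]
  [NormedAddCommGroup K] [InnerProductSpace 𝕜 K]
  [NormedAddCommGroup E] [InnerProductSpace 𝕜 E]
  (t : H →L[𝕜] K →L[𝕜] E)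

/-- Its topological closure is the subspace `H ⊗ F` of `H ⊗ K`. -/
def tensorSpan (F : Submodule 𝕜 K) : Submodule 𝕜 E :=
  span 𝕜 {z : E | ∃ ξ, ∃ η ∈ F, z = t ξ η}

variable {t}

theorem mem_orthogonal_tensorSpan_iff {F : Submodule 𝕜 K} {z : E} :
    z ∈ (tensorSpan t F)ᗮ ↔ ∀ ξ, F ≤ ((innerSL 𝕜 z).comp (t ξ)).ker := by
  rw [mem_orthogonal']
  refine ⟨fun h ξ η hη ↦ h _ (subset_span ⟨ξ, η, hη, rfl⟩), fun h u hu ↦ ?_⟩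
  refine (span_le (p := (innerSL 𝕜 z).ker)).2 ?_ hu
  rintro _ ⟨ξ, η, hη, rfl⟩
  exact h ξ hη

theorem span_tensors_le_tensorSpan_sup_tensorSpan_orthogonal (F : Submodule 𝕜 K)
    [F.HasOrthogonalProjection] :
    span 𝕜 {z : E | ∃ ξ η, z = t ξ η} ≤ tensorSpan t F ⊔ tensorSpan t Fᗮ := by
  refine span_le.2 ?_
  rintro _ ⟨ξ, η, rfl⟩
  obtain ⟨a, ha, b, hb, rfl⟩ := F.exists_add_mem_mem_orthogonal η
  rw [map_add]
  exact add_mem_sup (subset_span ⟨ξ, a, ha, rfl⟩) (subset_span ⟨ξ, b, hb, rfl⟩)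

variable (ht : ∀ (ξ ξ' : H) (η η' : K), inner 𝕜 (t ξ η) (t ξ' η') = inner 𝕜 ξ ξ' * inner 𝕜 η η')
include ht

theorem tensorSpan_le_orthogonal_tensorSpan_orthogonal (F : Submodule 𝕜 K) :
    tensorSpan t F ≤ (tensorSpan t Fᗮ)ᗮ := by
  refine span_le.2 ?_
  rintro _ ⟨ξ, η, hη, rfl⟩
  refine mem_orthogonal_tensorSpan_iff.2 fun ξ' η' hη' ↦ ?_
  change inner 𝕜 (t ξ η) (t ξ' η') = 0
  rw [ht, inner_right_of_mem_orthogonal hη hη', mul_zero]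

theorem eq_zero_of_tensor_eq_zero {ξ : H} {η : K} (h : t ξ η = 0) (hξ : ξ ≠ 0) : η = 0 := by
  have : inner 𝕜 ξ ξ * inner 𝕜 η η = 0 := by rw [← ht, h, inner_zero_left]
  simpa [hξ] using this

theorem eq_bot_of_topologicalClosure_tensorSpan_eq_bot [Nontrivial H] {F : Submodule 𝕜 K}
    (h : (tensorSpan t F).topologicalClosure = ⊥) : F = ⊥ := by
  obtain ⟨ξ, hξ⟩ := exists_ne (0 : H)
  refine eq_bot_iff.2 fun η hη ↦ (mem_bot 𝕜).2 (eq_zero_of_tensor_eq_zero ht ?_ hξ)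
  rw [← mem_bot 𝕜, ← h]
  exact le_topologicalClosure _ (subset_span ⟨ξ, η, hη, rfl⟩)

variable [CompleteSpace E] (hdense : Dense (span 𝕜 {z : E | ∃ ξ η, z = t ξ η} : Set E))
include hdense

theorem orthogonal_tensorSpan_orthogonal (F : Submodule 𝕜 K) [F.HasOrthogonalProjection] :
    (tensorSpan t Fᗮ)ᗮ = (tensorSpan t F).topologicalClosure := by
  refine orthogonal_eq_topologicalClosure_of_le_orthogonal
    (tensorSpan_le_orthogonal_tensorSpan_orthogonal ht F) (eq_bot_iff.2 ?_)
  have hbot : (span 𝕜 {z : E | ∃ ξ η, z = t ξ η})ᗮ = ⊥ :=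
    topologicalClosure_eq_top_iff.1 (dense_iff_topologicalClosure_eq_top.1 hdense)
  rw [sup_comm, ← hbot]
  exact orthogonal_le (span_tensors_le_tensorSpan_sup_tensorSpan_orthogonal F)

theorem topologicalClosure_tensorSpan_inf [CompleteSpace K] {F₁ F₂ : Submodule 𝕜 K}
    (hF₁ : IsClosed (F₁ : Set K)) (hF₂ : IsClosed (F₂ : Set K)) :
    (tensorSpan t F₁).topologicalClosure ⊓ (tensorSpan t F₂).topologicalClosure =
      (tensorSpan t (F₁ ⊓ F₂)).topologicalClosure := by
  have := hF₁.completeSpace_coe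
  have := hF₂.completeSpace_coe
  have := (hF₁.inter hF₂).completeSpace_coe
  have hclosure : (F₁ ⊓ F₂)ᗮ = (F₁ᗮ ⊔ F₂ᗮ).topologicalClosure := by
    rw [← orthogonal_orthogonal_eq_closure, ← inf_orthogonal, orthogonal_orthogonal,
      orthogonal_orthogonal]
  simp only [← orthogonal_tensorSpan_orthogonal ht hdense]
  ext z
  simp only [mem_inf, mem_orthogonal_tensorSpan_iff, ← forall_and, ← sup_le_iff, hclosure]
  refine forall_congr' fun ξ ↦ ⟨fun h ↦ ?_, fun h ↦ (le_topologicalClosure _).trans h⟩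
  exact topologicalClosure_minimal _ h (ContinuousLinearMap.isClosed_ker _)

end TensorSpan

theorem stmt_5_general {H K E : Type*}
    [NormedAddCommGroup H] [InnerProductSpace ℂ H] [Nontrivial H]
    [NormedAddCommGroup K] [InnerProductSpace ℂ K] [CompleteSpace K]
    [NormedAddCommGroup E] [InnerProductSpace ℂ E] [CompleteSpace E]
    (t : H →L[ℂ] K →L[ℂ] E)
    (ht : ∀ (ξ ξ' : H) (η η' : K),
      (inner ℂ (t ξ η) (t ξ' η') : ℂ) = (inner ℂ ξ ξ' : ℂ) * (inner ℂ η η' : ℂ))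
    (hdense : Dense (↑(Submodule.span ℂ {z : E | ∃ ξ η, z = t ξ η}) : Set E))
    (F₁ F₂ : Submodule ℂ K) (hF₁ : IsClosed (F₁ : Set K)) (hF₂ : IsClosed (F₂ : Set K)) :
    ((Submodule.span ℂ {z : E | ∃ ξ, ∃ η ∈ F₁, z = t ξ η}).topologicalClosure ⊓
        (Submodule.span ℂ {z : E | ∃ ξ, ∃ η ∈ F₂, z = t ξ η}).topologicalClosure =
      (Submodule.span ℂ {z : E | ∃ ξ, ∃ η ∈ F₁ ⊓ F₂, z = t ξ η}).topologicalClosure) ∧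
    ((Submodule.span ℂ {z : E | ∃ ξ, ∃ η ∈ F₁, z = t ξ η}).topologicalClosure ⊓
        (Submodule.span ℂ {z : E | ∃ ξ, ∃ η ∈ F₂, z = t ξ η}).topologicalClosure = ⊥ →
      F₁ ⊓ F₂ = ⊥) := by
  have hinf := topologicalClosure_tensorSpan_inf ht hdense hF₁ hF₂
  exact ⟨hinf, fun hbot ↦
    eq_bot_of_topologicalClosure_tensorSpan_eq_bot ht (hinf.symm.trans hbot)⟩

/-- With `E` a Hilbert tensor product of `H ≠ 0` and `K` (witnessed by `t`), and closed subspaces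
`F₁, F₂ ⊆ K`, the intersection of the closed subspaces `H ⊗ F₁` and `H ⊗ F₂` of `H ⊗ K` equals
`H ⊗ (F₁ ∩ F₂)`; in particular if the intersection is zero then `F₁ ∩ F₂ = 0`. -/
theorem stmt_5 {H K E : Type*}
    [NormedAddCommGroup H] [InnerProductSpace ℂ H] [CompleteSpace H] [Nontrivial H]
    [NormedAddCommGroup K] [InnerProductSpace ℂ K] [CompleteSpace K]
    [NormedAddCommGroup E] [InnerProductSpace ℂ E] [CompleteSpace E]
    (t : H →L[ℂ] K →L[ℂ] E)
    (ht : ∀ (ξ ξ' : H) (η η' : K),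
      (inner ℂ (t ξ η) (t ξ' η') : ℂ) = (inner ℂ ξ ξ' : ℂ) * (inner ℂ η η' : ℂ))
    (hdense : Dense (↑(Submodule.span ℂ {z : E | ∃ ξ η, z = t ξ η}) : Set E))
    (F₁ F₂ : Submodule ℂ K) (hF₁ : IsClosed (F₁ : Set K)) (hF₂ : IsClosed (F₂ : Set K)) :
    ((Submodule.span ℂ {z : E | ∃ ξ, ∃ η ∈ F₁, z = t ξ η}).topologicalClosure ⊓
        (Submodule.span ℂ {z : E | ∃ ξ, ∃ η ∈ F₂, z = t ξ η}).topologicalClosure =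
      (Submodule.span ℂ {z : E | ∃ ξ, ∃ η ∈ F₁ ⊓ F₂, z = t ξ η}).topologicalClosure) ∧
    ((Submodule.span ℂ {z : E | ∃ ξ, ∃ η ∈ F₁, z = t ξ η}).topologicalClosure ⊓
        (Submodule.span ℂ {z : E | ∃ ξ, ∃ η ∈ F₂, z = t ξ η}).topologicalClosure = ⊥ →
      F₁ ⊓ F₂ = ⊥) :=
  stmt_5_general t ht hdense F₁ F₂ hF₁ hF₂
end

section
/- Let H be a Hilbert space and (a_i)_{i∈I} a family of bounded positive operators on H that are pairwise orthogonal, in the sense that a_i a_j = 0 whenever i ≠ j, and suppose the finite partial sums of Σ_i a_i are uniformly bounded so that Σ_i a_i converges in the strong operator topology to a bounded operator S. Then ‖S‖ = sup_{i∈I} ‖a_i‖. -/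
open scoped InnerProductSpace
open RCLike

/-!
Orthogonality gives `a i * S = a i * a i`, so the C⋆-identity yields
`‖a i‖ ^ 2 = ‖a i * S‖ ≤ ‖a i‖ * ‖S‖`. Conversely, the vectors `a i ξ` are pairwise orthogonal,
so `‖S ξ‖ ^ 2 = ∑ ‖a i ξ‖ ^ 2`; writing `a i` as the square of its positive square root gives
`‖a i ξ‖ ^ 2 ≤ ‖a i‖ * re ⟪ξ, a i ξ⟫`, and summing,
`‖S ξ‖ ^ 2 ≤ (⨆ i, ‖a i‖) * re ⟪ξ, S ξ⟫ ≤ (⨆ i, ‖a i‖) * ‖ξ‖ * ‖S ξ‖`.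
-/

theorem le_of_sq_le_mul {α : Type*} [CommRing α] [LinearOrder α] [IsStrictOrderedRing α]
    {x y : α} (hy : 0 ≤ y) (h : x ^ 2 ≤ x * y) : x ≤ y := by
  nlinarith

theorem IsSelfAdjoint.norm_le_of_mul_eq_mul_self {A : Type*} [NonUnitalNormedRing A] [StarRing A]
    [CStarRing A] {x s : A} (hx : IsSelfAdjoint x) (hxs : x * s = x * x) : ‖x‖ ≤ ‖s‖ :=
  le_of_sq_le_mul (norm_nonneg s) <| by
    simpa [← hx.norm_mul_self, ← hxs] using norm_mul_le x s

namespace ContinuousLinearMap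

theorem mul_eq_mul_self_of_hasSum {R M I : Type*} [Semiring R] [AddCommMonoid M] [Module R M]
    [TopologicalSpace M] [T2Space M] {a : I → M →L[R] M} {S : M →L[R] M}
    (horth : ∀ i j, i ≠ j → a i * a j = 0) (hS : ∀ x, HasSum (fun i => a i x) (S x)) (i : I) :
    a i * S = a i * a i := by
  ext x
  refine ((a i).hasSum (hS x)).unique (hasSum_single i fun j hj => ?_)
  rw [← mul_apply_eq_comp, horth i j hj.symm, zero_apply]

section RCLike

variable {𝕜 E I : Type*} [RCLike 𝕜] [NormedAddCommGroup E] [InnerProductSpace 𝕜 E]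
  {a : I → E →L[𝕜] E} {S : E →L[𝕜] E}

theorem hasSum_norm_sq_apply (hsymm : ∀ i, (a i : E →ₗ[𝕜] E).IsSymmetric)
    (horth : ∀ i j, i ≠ j → a i * a j = 0) (hS : ∀ x, HasSum (fun i => a i x) (S x)) (x : E) :
    HasSum (fun i => ‖a i x‖ ^ 2) (‖S x‖ ^ 2) := by
  have hterm (i : I) : ⟪S x, a i x⟫_𝕜 = ⟪a i x, a i x⟫_𝕜 :=
    calc ⟪S x, a i x⟫_𝕜 = ⟪(a i * S) x, x⟫_𝕜 := (hsymm i _ _).symm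
      _ = ⟪(a i * a i) x, x⟫_𝕜 := by rw [mul_eq_mul_self_of_hasSum horth hS]
      _ = ⟪a i x, a i x⟫_𝕜 := hsymm i _ _
  simpa only [innerSL_apply_apply, hterm, reCLM_apply, inner_self_eq_norm_sq] using
    reCLM.hasSum ((innerSL 𝕜 (S x)).hasSum (hS x))

theorem norm_le_of_hasSum [CompleteSpace E] {i : I} (ha : IsSelfAdjoint (a i))
    (horth : ∀ i j, i ≠ j → a i * a j = 0) (hS : ∀ x, HasSum (fun i => a i x) (S x)) :
    ‖a i‖ ≤ ‖S‖ :=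
  ha.norm_le_of_mul_eq_mul_self (mul_eq_mul_self_of_hasSum horth hS i)

end RCLike

variable {H I : Type*} [NormedAddCommGroup H] [InnerProductSpace ℂ H] [CompleteSpace H]
  {a : I → H →L[ℂ] H} {S : H →L[ℂ] H}

theorem IsPositive.norm_apply_sq_le {T : H →L[ℂ] H} (hT : T.IsPositive) (x : H) :
    ‖T x‖ ^ 2 ≤ ‖T‖ * re ⟪x, T x⟫_ℂ := by
  set b := CFC.sqrt T
  have hb : b.IsPositive := (nonneg_iff_isPositive b).mp (CFC.sqrt_nonneg T)
  have hbb : b * b = T := CFC.sqrt_mul_sqrt_self T ((nonneg_iff_isPositive T).mpr hT)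
  have hnorm : ‖b‖ ^ 2 = ‖T‖ := by rw [← hb.isSelfAdjoint.norm_mul_self, hbb]
  have hinner : ‖b x‖ ^ 2 = re ⟪x, T x⟫_ℂ := by
    rw [← hbb, mul_apply_eq_comp, ← hb.inner_left_eq_inner_right, inner_self_eq_norm_sq]
  calc ‖T x‖ ^ 2 = ‖b (b x)‖ ^ 2 := by rw [← mul_apply_eq_comp, hbb]
    _ ≤ (‖b‖ * ‖b x‖) ^ 2 := by gcongr; exact b.le_opNorm _
    _ = ‖T‖ * re ⟪x, T x⟫_ℂ := by rw [mul_pow, hnorm, hinner]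

theorem norm_le_iSup_norm_of_hasSum (hpos : ∀ i, (a i).IsPositive)
    (horth : ∀ i j, i ≠ j → a i * a j = 0) (hS : ∀ x, HasSum (fun i => a i x) (S x)) :
    ‖S‖ ≤ ⨆ i, ‖a i‖ := by
  set M := ⨆ i, ‖a i‖
  have hbdd : BddAbove (Set.range fun i => ‖a i‖) :=
    ⟨‖S‖, Set.forall_mem_range.2 fun i => norm_le_of_hasSum (hpos i).isSelfAdjoint horth hS⟩
  have hM : 0 ≤ M := Real.iSup_nonneg fun i => norm_nonneg (a i)
  refine S.opNorm_le_bound hM fun x => le_of_sq_le_mul (by positivity) ?_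
  have hre : HasSum (fun i => re ⟪x, a i x⟫_ℂ) (re ⟪x, S x⟫_ℂ) :=
    reCLM.hasSum ((innerSL ℂ x).hasSum (hS x))
  calc ‖S x‖ ^ 2 ≤ M * re ⟪x, S x⟫_ℂ :=
        hasSum_le (fun i => ((hpos i).norm_apply_sq_le x).trans <|
            mul_le_mul_of_nonneg_right (le_ciSup hbdd i) ((hpos i).re_inner_nonneg_right x))
          (hasSum_norm_sq_apply (fun i => (hpos i).isSymmetric) horth hS x) (hre.mul_left M)
    _ ≤ M * (‖x‖ * ‖S x‖) := by gcongr; exact re_inner_le_norm _ _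
    _ = ‖S x‖ * (M * ‖x‖) := by ring

end ContinuousLinearMap

/-- If `(a_i)` are pairwise orthogonal bounded positive operators whose sum converges in the
strong operator topology to a bounded operator `S`, then `‖S‖ = sup_i ‖a_i‖`. -/
theorem stmt_6 {I H : Type*} [NormedAddCommGroup H] [InnerProductSpace ℂ H] [CompleteSpace H]
    (a : I → H →L[ℂ] H) (hpos : ∀ i, (a i).IsPositive)
    (horth : ∀ i j, i ≠ j → a i * a j = 0)
    (S : H →L[ℂ] H) (hS : ∀ ξ : H, HasSum (fun i => a i ξ) (S ξ)) :
    ‖S‖ = ⨆ i, ‖a i‖ :=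
  le_antisymm (S.norm_le_iSup_norm_of_hasSum hpos horth hS) <|
    Real.iSup_le (fun i => ContinuousLinearMap.norm_le_of_hasSum (hpos i).isSelfAdjoint horth hS)
      (norm_nonneg S)
end

section
/- Let ℓ²(ℕ) have canonical orthonormal basis (δ_i)_{i≥1} and let ℓ²(ℕ₀) have basis (δ_i)_{i≥0}. For ξ, η ∈ ℓ²(ℕ₀) let θ_{ξ,η} ∈ B(ℓ²(ℕ₀)) denote the rank-one operator γ ↦ ⟨γ, η⟩ ξ. Then the linear map θ₀ : span{δ_i} → B(ℓ²(ℕ₀)) defined by θ₀(δ_i) = θ_{δ_i, δ_i + δ_0} extends to a bounded, bounded-below, multiplicative linear map from the Banach algebra ℓ²(ℕ) (with pointwise multiplication) into B(ℓ²(ℕ₀)). -/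
/-!
Writing `S` for the unilateral shift, `θ(a)` acts coordinatewise by
`(θ(a)γ)ₙ = (S a)ₙ (γₙ + γ₀)`, which on basis vectors is `θ_{δ_{i+1}, δ_{i+1}+δ₀}`.
Since `|γₙ + γ₀| ≤ 2‖γ‖`, this gives `‖θ(a)‖ ≤ 2‖a‖`. Every `θ(b)γ` vanishes at `0`, so
`θ(a)θ(b)γ` has coordinates `(S a)ₙ (S b)ₙ (γₙ + γ₀)`, i.e. `θ(a)θ(b) = θ(ab)`. Finally
`θ(a)δ₀ = S a` and `S` is an isometry, so `‖θ(a)‖ ≥ ‖a‖`.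
-/

open scoped ENNReal

theorem lp.norm_le_mul_norm_of_forall_le {α : Type*} {E F : α → Type*}
    [∀ i, NormedAddCommGroup (E i)] [∀ i, NormedAddCommGroup (F i)] [∀ i, NormedSpace ℝ (F i)]
    {p : ℝ≥0∞} (hp : p ≠ 0) {x : lp E p} {y : lp F p} {C : ℝ} (hC : 0 ≤ C)
    (h : ∀ i, ‖x i‖ ≤ C * ‖y i‖) : ‖x‖ ≤ C * ‖y‖ := by
  calc ‖x‖ ≤ ‖C • y‖ := lp.norm_mono hp fun i => by
          simpa [lp.coeFn_smul, norm_smul, abs_of_nonneg hC] using h i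
    _ = C * ‖y‖ := by rw [lp.norm_const_smul hp, Real.norm_of_nonneg hC]

def shiftSeq {E : Type*} [Zero E] (a : ℕ → E) : ℕ → E
  | 0 => 0
  | n + 1 => a n

@[simp] theorem shiftSeq_zero {E : Type*} [Zero E] (a : ℕ → E) : shiftSeq a 0 = 0 := rfl

@[simp] theorem shiftSeq_succ {E : Type*} [Zero E] (a : ℕ → E) (n : ℕ) :
    shiftSeq a (n + 1) = a n := rfl

section Shift

variable {𝕜 E : Type*} [NormedField 𝕜] [NormedAddCommGroup E] [NormedSpace 𝕜 E]

theorem hasSum_norm_sq_shiftSeq (a : lp (fun _ : ℕ => E) 2) :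
    HasSum (fun n => ‖shiftSeq a n‖ ^ 2) (‖a‖ ^ 2) :=
  (hasSum_nat_add_iff' 1).mp <| by simpa using lp.hasSum_norm (p := 2) (by norm_num) a

theorem memℓp_shiftSeq (a : lp (fun _ : ℕ => E) 2) : Memℓp (shiftSeq a) 2 :=
  memℓp_gen (by simpa using (hasSum_norm_sq_shiftSeq a).summable)

theorem norm_mk_shiftSeq (a : lp (fun _ : ℕ => E) 2) :
    ‖(⟨shiftSeq a, memℓp_shiftSeq a⟩ : lp (fun _ : ℕ => E) 2)‖ = ‖a‖ := by
  rw [← pow_left_inj₀ (norm_nonneg _) (norm_nonneg _) two_ne_zero]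
  refine HasSum.unique ?_ (hasSum_norm_sq_shiftSeq a)
  simpa using lp.hasSum_norm (p := 2) (by norm_num) ⟨shiftSeq a, memℓp_shiftSeq a⟩

variable (𝕜) in
def lp.shiftRight : lp (fun _ : ℕ => E) 2 →ₗᵢ[𝕜] lp (fun _ : ℕ => E) 2 where
  toFun a := ⟨shiftSeq a, memℓp_shiftSeq a⟩
  map_add' a b := by
    ext n
    cases n <;> simp only [Pi.add_apply, shiftSeq_zero, shiftSeq_succ, lp.coeFn_add, add_zero]
  map_smul' c a := by
    ext n
    cases n <;> simp only [Pi.smul_apply, shiftSeq_zero, shiftSeq_succ, lp.coeFn_smul, smul_zero,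
      RingHom.id_apply]
  norm_map' := norm_mk_shiftSeq

@[simp] theorem lp.shiftRight_apply (a : lp (fun _ : ℕ => E) 2) (n : ℕ) :
    lp.shiftRight 𝕜 a n = shiftSeq a n := rfl

end Shift

section Theta

variable {𝕜 : Type*} [RCLike 𝕜]

local notation "ℓ²" => lp (fun _ : ℕ => 𝕜) 2

theorem norm_shiftRight_mul_le (a γ : ℓ²) (n : ℕ) :
    ‖lp.shiftRight 𝕜 a n * (γ n + γ 0)‖ ≤ 2 * ‖γ‖ * ‖lp.shiftRight 𝕜 a n‖ := by
  have hγ : ‖γ n + γ 0‖ ≤ 2 * ‖γ‖ := by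
    have := lp.norm_apply_le_norm two_ne_zero γ
    linarith [norm_add_le (γ n) (γ 0), this n, this 0]
  rw [norm_mul, mul_comm]
  gcongr

noncomputable def theta : ℓ² →L[𝕜] ℓ² →L[𝕜] ℓ² :=
  LinearMap.mkContinuous₂
    (LinearMap.mk₂ 𝕜
      (fun a γ => ⟨fun n => lp.shiftRight 𝕜 a n * (γ n + γ 0),
        ((lp.memℓp (lp.shiftRight 𝕜 a)).norm.const_mul (2 * ‖γ‖)).mono
          (norm_shiftRight_mul_le a γ)⟩)
      (fun a b γ => by ext n; simp only [map_add, lp.coeFn_add, Pi.add_apply]; ring)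
      (fun c a γ => by ext n; simp [mul_assoc])
      (fun a γ δ => by ext n; simp only [lp.coeFn_add, Pi.add_apply]; ring)
      (fun c a γ => by ext n; simp; ring))
    2 fun a γ => by
      refine (lp.norm_le_mul_norm_of_forall_le two_ne_zero (by positivity)
        (norm_shiftRight_mul_le a γ)).trans_eq ?_
      rw [LinearIsometry.norm_map]
      ring

theorem theta_apply_apply (a γ : ℓ²) (n : ℕ) :
    theta a γ n = lp.shiftRight 𝕜 a n * (γ n + γ 0) := rfl

theorem theta_single (i : ℕ) :
    theta (lp.single 2 i 1) =
      (innerSL 𝕜 (lp.single 2 (i + 1) 1 + lp.single 2 0 1)).smulRight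
        (lp.single 2 (i + 1) (1 : 𝕜)) := by
  ext γ n
  have hinner : innerSL 𝕜 (lp.single 2 (i + 1) 1 + lp.single 2 0 1) γ = γ (i + 1) + γ 0 := by
    simp [lp.inner_single_left]
  rw [ContinuousLinearMap.smulRight_apply, hinner, lp.coeFn_smul, Pi.smul_apply, smul_eq_mul,
    theta_apply_apply]
  rcases n with _ | m
  · simp [lp.single_apply]
  · rcases eq_or_ne m i with rfl | hmi
    · simp
    · simp [lp.single_apply, hmi]

theorem theta_mul {a b c : ℓ²} (h : ∀ n, c n = a n * b n) : theta c = theta a * theta b := by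
  ext γ n
  rw [mul_apply_eq_comp]
  rcases n with _ | m
  · simp [theta_apply_apply]
  · simp only [theta_apply_apply, lp.shiftRight_apply, shiftSeq_succ, shiftSeq_zero, h]
    ring

theorem norm_le_norm_theta (a : ℓ²) : ‖a‖ ≤ ‖theta a‖ := by
  have hδ : theta a (lp.single 2 0 1) = lp.shiftRight 𝕜 a := by
    ext n
    rcases n with _ | m <;> simp [theta_apply_apply, lp.single_apply]
  calc ‖a‖ = ‖theta a (lp.single 2 0 1)‖ := by rw [hδ, LinearIsometry.norm_map]
    _ ≤ ‖theta a‖ * ‖(lp.single 2 0 1 : ℓ²)‖ := (theta a).le_opNorm _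
    _ = ‖theta a‖ := by rw [lp.norm_single (by norm_num), norm_one, mul_one]

end Theta

/-- The map `θ₀` determined on basis vectors by `θ₀(δ_i) = θ_{δ_i, δ_i + δ_0}` (for `i ≥ 1`,
where `θ_{ξ,η} : γ ↦ ⟨γ,η⟩ξ` is a rank-one operator) extends to a bounded, bounded-below,
multiplicative linear map from `ℓ²(ℕ)` with pointwise multiplication into `B(ℓ²(ℕ₀))`.
Here `ℓ²(ℕ)` is indexed by Lean's `ℕ`, with its `i`-th basis vector sent to
`θ_{δ_{i+1}, δ_{i+1} + δ_0}`. -/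
theorem stmt_11 :
    ∃ θ : lp (fun _ : ℕ => ℂ) 2 →L[ℂ] (lp (fun _ : ℕ => ℂ) 2 →L[ℂ] lp (fun _ : ℕ => ℂ) 2),
      (∀ i : ℕ, θ (lp.single 2 i 1) =
        (innerSL ℂ (lp.single 2 (i + 1) 1 + lp.single 2 0 1)).smulRight
          (lp.single 2 (i + 1) (1 : ℂ))) ∧
      (∀ a b c : lp (fun _ : ℕ => ℂ) 2,
        (∀ n, (c : ∀ _ : ℕ, ℂ) n = (a : ∀ _ : ℕ, ℂ) n * (b : ∀ _ : ℕ, ℂ) n) →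
          θ c = θ a * θ b) ∧
      ∃ C : ℝ, 0 < C ∧ ∀ a, C * ‖a‖ ≤ ‖θ a‖ :=
  ⟨theta, theta_single, fun _ _ _ => theta_mul, 1, one_pos,
    fun a => (one_mul ‖a‖).trans_le (norm_le_norm_theta a)⟩
end

section
/- Let H be a Hilbert space, A a Banach *-algebra, and π : A → B(H) a homomorphism. Let H_e be the closed linear span of {π(a)ξ : a ∈ A, ξ ∈ H}, and suppose there is a bounded (not necessarily orthogonal) idempotent Q ∈ B(H) with range H_e such that π(a)Q = π(a) for all a ∈ A. If the restriction π_e of π to H_e (i.e. a ↦ π(a)|_{H_e} ∈ B(H_e)) is similar to a *-representation, then π is similar to a *-representation. -/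
/-!
Let `P` be the orthogonal projection onto `H_e`. The idempotents `P` and `Q` have the same range,
so `(1 - P)(1 - Q)` maps `ker Q` bijectively onto `H_eᗮ`, with inverse `(1 - Q)(1 - P)`. Hence
`T = T₀ Q + (1 - P)(1 - Q)` is invertible, with inverse `T₀⁻¹ P + (1 - Q)(1 - P)`. Since `π(a)`
vanishes on `ker Q` and `T₀⁻¹` intertwines `σ(a)` with `π(a)` on `H_e`, the operator `T π(a) T⁻¹`
is `σ(a) ⊕ 0` with respect to `H = H_e ⊕ H_eᗮ`, and this is a *-representation because `σ` is.
-/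

section ExtendByComplement

variable {R : Type*} [Ring R] {p q t t' s r : R}

theorem isIdempotentElem_of_mul_eq_of_mul_eq (hpq : p * q = q) (hqp : q * p = p) :
    IsIdempotentElem p := calc
  p * p = p * (q * p) := by rw [hqp]
  _ = p := by rw [← mul_assoc, hpq, hqp]

def extendByComplement (t p q : R) : R := t * q + (1 - p) * (1 - q)

theorem extendByComplement_mul_of_mul_eq (ht' : q * t' = t') :
    extendByComplement t p q * t' = t * t' := by
  have hq't : (1 - q) * t' = 0 := by rw [sub_mul, one_mul, ht', sub_self]
  rw [extendByComplement, add_mul, mul_assoc t, ht', mul_assoc, hq't, mul_zero, add_zero]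

theorem extendByComplement_mul_extendByComplement (hpq : p * q = q) (hqp : q * p = p)
    (ht' : q * t' = t') (htt' : t * t' * p = p) :
    extendByComplement t p q * extendByComplement t' q p = 1 := by
  have hp : p * p = p := isIdempotentElem_of_mul_eq_of_mul_eq hpq hqp
  have hq : q * q = q := isIdempotentElem_of_mul_eq_of_mul_eq hqp hpq
  have hq1 : q * (1 - q) = 0 := by rw [mul_sub, mul_one, hq, sub_self]
  have hswitch : (1 - p) * (1 - q) * ((1 - q) * (1 - p)) = 1 - p := by
    simp only [mul_sub, sub_mul, one_mul, mul_one, hq, hpq]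
    simp only [hqp, hp]
    abel
  calc extendByComplement t p q * extendByComplement t' q p
      = extendByComplement t p q * t' * p + t * (q * (1 - q)) * (1 - p)
        + (1 - p) * (1 - q) * ((1 - q) * (1 - p)) := by
        simp only [extendByComplement]; noncomm_ring
    _ = 1 := by
      rw [extendByComplement_mul_of_mul_eq ht', htt', hq1, hswitch]
      noncomm_ring

def extendByComplementUnit (hpq : p * q = q) (hqp : q * p = p) (ht : p * t = t)
    (ht' : p * t' = t') (htt' : t * t' = p) (ht't : t' * t = p) : Rˣ where
  val := extendByComplement t p q
  inv := extendByComplement t' q p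
  val_inv := extendByComplement_mul_extendByComplement hpq hqp
    (by rw [← ht', ← mul_assoc, hqp])
    (by rw [htt', isIdempotentElem_of_mul_eq_of_mul_eq hpq hqp])
  inv_val := extendByComplement_mul_extendByComplement hqp hpq ht (by rw [ht't, hpq])

theorem extendByComplementUnit_mul_mul_inv (hpq : p * q = q) (hqp : q * p = p) (ht : p * t = t)
    (ht' : p * t' = t') (htt' : t * t' = p) (ht't : t' * t = p)
    (hs : s * q = s) (hst : s * t' = t' * r) (hr : p * r * p = r) :
    (extendByComplementUnit hpq hqp ht ht' htt' ht't : R) * s *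
      ↑(extendByComplementUnit hpq hqp ht ht' htt' ht't)⁻¹ = r := by
  have hs' : s * (1 - q) = 0 := by rw [mul_sub, mul_one, hs, sub_self]
  have hqt' : q * t' = t' := by rw [← ht', ← mul_assoc, hqp]
  change extendByComplement t p q * s * extendByComplement t' q p = r
  calc extendByComplement t p q * s * extendByComplement t' q p
      = extendByComplement t p q * (s * t') * p
        + extendByComplement t p q * (s * (1 - q)) * (1 - p) := by
        simp only [extendByComplement]; noncomm_ring
    _ = r := by
      rw [hst, hs', ← mul_assoc, extendByComplement_mul_of_mul_eq hqt', htt', mul_zero, zero_mul,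
        add_zero, hr]

end ExtendByComplement

namespace Submodule

variable {𝕜 E : Type*} [RCLike 𝕜] [NormedAddCommGroup E] [InnerProductSpace 𝕜 E]
  (K : Submodule 𝕜 E) [K.HasOrthogonalProjection]

noncomputable def extendByZero (R : K →L[𝕜] K) : E →L[𝕜] E :=
  K.subtypeL ∘L R ∘L K.orthogonalProjectionOnto

variable {K}

theorem extendByZero_mul (R S : K →L[𝕜] K) :
    K.extendByZero (R * S) = K.extendByZero R * K.extendByZero S := by
  ext x; simp [extendByZero, orthogonalProjectionOnto_mem_subspace_eq_self]

theorem extendByZero_one : K.extendByZero 1 = K.starProjection := rfl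

theorem starProjection_mul_extendByZero (R : K →L[𝕜] K) :
    K.starProjection * K.extendByZero R = K.extendByZero R := by
  rw [← extendByZero_one, ← extendByZero_mul, one_mul]

theorem extendByZero_mul_starProjection (R : K →L[𝕜] K) :
    K.extendByZero R * K.starProjection = K.extendByZero R := by
  rw [← extendByZero_one, ← extendByZero_mul, mul_one]

theorem extendByZero_mul_extendByZero_symm (e : K ≃L[𝕜] K) :
    K.extendByZero e * K.extendByZero e.symm = K.starProjection := by
  rw [← extendByZero_mul, ContinuousLinearMap.mul_def, e.coe_comp_coe_symm]; rfl

theorem extendByZero_symm_mul_extendByZero (e : K ≃L[𝕜] K) :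
    K.extendByZero e.symm * K.extendByZero e = K.starProjection := by
  rw [← extendByZero_mul, ContinuousLinearMap.mul_def, e.coe_symm_comp_coe]; rfl

theorem mul_extendByZero_of_apply {s : E →L[𝕜] E} {R W : K →L[𝕜] K}
    (h : ∀ ξ, s (W ξ) = W (R ξ)) :
    s * K.extendByZero W = K.extendByZero W * K.extendByZero R := by
  ext x; simp [extendByZero, h, orthogonalProjectionOnto_mem_subspace_eq_self]

theorem starProjection_mul_of_range_le {Q : E →L[𝕜] E}
    (h : LinearMap.range (Q : E →ₗ[𝕜] E) ≤ K) : K.starProjection * Q = Q := by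
  ext x; exact starProjection_eq_self_iff.2 (h (LinearMap.mem_range_self _ x))

theorem mul_starProjection_of_le_range {Q : E →L[𝕜] E} (hQ : IsIdempotentElem Q)
    (h : K ≤ LinearMap.range (Q : E →ₗ[𝕜] E)) : Q * K.starProjection = K.starProjection := by
  ext x
  exact (LinearMap.IsIdempotentElem.mem_range_iff
    (ContinuousLinearMap.IsIdempotentElem.toLinearMap hQ)).1 (h (K.starProjection_apply_mem x))

theorem adjoint_extendByZero [CompleteSpace E] [CompleteSpace K] (R : K →L[𝕜] K) :
    (K.extendByZero R).adjoint = K.extendByZero R.adjoint := by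
  simp only [extendByZero, ContinuousLinearMap.adjoint_comp, adjoint_subtypeL,
    adjoint_orthogonalProjectionOnto, ContinuousLinearMap.comp_assoc]

end Submodule

theorem stmt_15_general {H A : Type*} [NormedAddCommGroup H] [InnerProductSpace ℂ H] [CompleteSpace H]
    [NormedRing A] [StarRing A] [NormedAlgebra ℂ A]
    (π : A →ₗ[ℂ] H →L[ℂ] H)
    (He : Submodule ℂ H)
    (Q : H →L[ℂ] H) (hQidem : Q * Q = Q) (hQrange : LinearMap.range (Q : H →ₗ[ℂ] H) = He)
    (hQ : ∀ a, π a * Q = π a)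
    (T₀ : He ≃L[ℂ] He) (σ : A → He →L[ℂ] He)
    (hσ : ∀ (a : A) (ξ : He), (T₀.symm (σ a ξ) : H) = π a (T₀.symm ξ : H))
    (hσstar : ∀ (a : A) (ξ η : He),
      (inner ℂ ((σ (star a) ξ : He) : H) ((η : H)) : ℂ) = inner ℂ (ξ : H) ((σ a η : He) : H)) :
    ∃ T : H ≃L[ℂ] H, ∀ a : A,
      (T : H →L[ℂ] H) ∘L π (star a) ∘L (T.symm : H →L[ℂ] H) =
        ContinuousLinearMap.adjoint ((T : H →L[ℂ] H) ∘L π a ∘L (T.symm : H →L[ℂ] H)) := by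
  have : CompleteSpace He :=
    hQrange ▸ (ContinuousLinearMap.IsIdempotentElem.isClosed_range hQidem).completeSpace_coe
  have hPQ : He.starProjection * Q = Q := Submodule.starProjection_mul_of_range_le hQrange.le
  have hQP : Q * He.starProjection = He.starProjection :=
    Submodule.mul_starProjection_of_le_range hQidem hQrange.ge
  let T := extendByComplementUnit hPQ hQP
    (Submodule.starProjection_mul_extendByZero _) (Submodule.starProjection_mul_extendByZero _)
    (Submodule.extendByZero_mul_extendByZero_symm T₀)
    (Submodule.extendByZero_symm_mul_extendByZero T₀)
  have hT : ∀ b, (T : H →L[ℂ] H) * π b * ↑T⁻¹ = He.extendByZero (σ b) := fun b =>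
    extendByComplementUnit_mul_mul_inv _ _ _ _ _ _ (hQ b)
      (Submodule.mul_extendByZero_of_apply fun ξ => (hσ b ξ).symm)
      (by rw [Submodule.starProjection_mul_extendByZero,
        Submodule.extendByZero_mul_starProjection])
  refine ⟨ContinuousLinearEquiv.unitsEquiv ℂ H T, fun a => ?_⟩
  have hσadj : σ (star a) = (σ a).adjoint := (ContinuousLinearMap.eq_adjoint_iff _ _).2 (hσstar a)
  change (T : H →L[ℂ] H) * π (star a) * ↑T⁻¹ = ((T : H →L[ℂ] H) * π a * ↑T⁻¹).adjoint
  rw [hT, hT, hσadj, Submodule.adjoint_extendByZero]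

/-- Let `π : A → B(H)` be a homomorphism of a Banach *-algebra, `H_e` the essential subspace,
and suppose there is a bounded idempotent `Q` with range `H_e` and `π(a)Q = π(a)` for all `a`.
If the restriction `π_e` of `π` to `H_e` is similar (via `T₀`) to a *-representation `σ`,
then `π` is similar to a *-representation. -/
theorem stmt_15 {H A : Type*} [NormedAddCommGroup H] [InnerProductSpace ℂ H] [CompleteSpace H]
    [NormedRing A] [StarRing A] [NormedStarGroup A] [NormedAlgebra ℂ A] [CompleteSpace A]
    (π : A →ₗ[ℂ] H →L[ℂ] H) (hmul : ∀ a b, π (a * b) = π a * π b)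
    (He : Submodule ℂ H)
    (hHe : He = (Submodule.span ℂ {v : H | ∃ a ξ, v = π a ξ}).topologicalClosure)
    (Q : H →L[ℂ] H) (hQidem : Q * Q = Q) (hQrange : LinearMap.range (Q : H →ₗ[ℂ] H) = He)
    (hQ : ∀ a, π a * Q = π a)
    (T₀ : He ≃L[ℂ] He) (σ : A → He →L[ℂ] He)
    (hσ : ∀ (a : A) (ξ : He), (T₀.symm (σ a ξ) : H) = π a (T₀.symm ξ : H))
    (hσmul : ∀ a b, σ (a * b) = σ a * σ b)
    (hσstar : ∀ (a : A) (ξ η : He),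
      (inner ℂ ((σ (star a) ξ : He) : H) ((η : H)) : ℂ) = inner ℂ (ξ : H) ((σ a η : He) : H)) :
    ∃ T : H ≃L[ℂ] H, ∀ a : A,
      (T : H →L[ℂ] H) ∘L π (star a) ∘L (T.symm : H →L[ℂ] H) =
        ContinuousLinearMap.adjoint ((T : H →L[ℂ] H) ∘L π a ∘L (T.symm : H →L[ℂ] H)) :=
  stmt_15_general π He Q hQidem hQrange hQ T₀ σ hσ hσstar
end
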